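/- Let m ∈ ℕ, N ∈ ℕ, p ∈ (0,1], and let Z ~ Bin(N, p). Then E[1/((Z+1)(Z+2)⋯(Z+m))] = (1/((N+1)(N+2)⋯(N+m) p^m)) · Σ_{r=0}^{N} C(N+m, r+m) p^{r+m} (1−p)^{N−r}, and in particular E[1/((Z+1)⋯(Z+m))] ≤ 1/((N+1)^m p^m). -/

import Mathlib

open Finset

/-
Proof idea: the identity `C(N, r) (N+1)⋯(N+m) = C(N+m, r+m) (r+1)⋯(r+m)` turns each term of the
expectation into `p^{-m} / ((N+1)⋯(N+m))` times a term of the binomial expansion of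
`(p + (1 - p))^{N+m}`. The remaining sum is a partial sum of that expansion, hence at most `1`,
and `(N+1)⋯(N+m) ≥ (N+1)^m`.
-/

theorem Nat.choose_mul_prod_range_add (m N r : ℕ) :
    N.choose r * ∏ j ∈ range m, (N + 1 + j)
      = (N + m).choose (r + m) * ∏ j ∈ range m, (r + 1 + j) := by
  induction m with
  | zero => simp
  | succ m ih =>
    have step : (N + 1 + m) * (N + m).choose (r + m)
        = (N + m + 1).choose (r + m + 1) * (r + 1 + m) := by
      rw [show N + 1 + m = N + m + 1 by ring, show r + 1 + m = r + m + 1 by ring]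
      exact Nat.add_one_mul_choose_eq (N + m) (r + m)
    rw [prod_range_succ, prod_range_succ, ← mul_assoc, ih, ← add_assoc, ← add_assoc]
    linear_combination (∏ j ∈ range m, (r + 1 + j)) * step

theorem sum_subset_binomial_le_one {n : ℕ} {p : ℝ} (hp0 : 0 ≤ p) (hp1 : p ≤ 1)
    {s : Finset ℕ} (hs : s ⊆ range (n + 1)) :
    ∑ k ∈ s, (n.choose k : ℝ) * p ^ k * (1 - p) ^ (n - k) ≤ 1 := by
  have hq : 0 ≤ 1 - p := by linarith
  calc ∑ k ∈ s, (n.choose k : ℝ) * p ^ k * (1 - p) ^ (n - k)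
      ≤ ∑ k ∈ range (n + 1), (n.choose k : ℝ) * p ^ k * (1 - p) ^ (n - k) :=
        sum_le_sum_of_subset_of_nonneg hs fun k _ _ => by positivity
    _ = (p + (1 - p)) ^ n := by
        rw [add_pow]
        exact sum_congr rfl fun k _ => by ring
    _ = 1 := by norm_num

theorem sum_range_choose_add_mul_pow_le_one (m N : ℕ) {p : ℝ} (hp0 : 0 ≤ p) (hp1 : p ≤ 1) :
    ∑ r ∈ range (N + 1), ((N + m).choose (r + m) : ℝ) * p ^ (r + m) * (1 - p) ^ (N - r)
      ≤ 1 := by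
  have shift : ∑ r ∈ range (N + 1),
        ((N + m).choose (r + m) : ℝ) * p ^ (r + m) * (1 - p) ^ (N - r)
      = ∑ k ∈ Ico m (N + m + 1), ((N + m).choose k : ℝ) * p ^ k * (1 - p) ^ (N + m - k) := by
    rw [sum_Ico_eq_sum_range, show N + m + 1 - m = N + 1 by omega]
    refine sum_congr rfl fun r _ => ?_
    rw [add_comm m r, Nat.add_sub_add_right]
  rw [shift]
  exact sum_subset_binomial_le_one hp0 hp1 fun k hk => by
    simp only [mem_Ico, mem_range] at hk ⊢
    omega

theorem choose_mul_pow_div_prod_range (m N r : ℕ) {p : ℝ} (hp : p ≠ 0) (q : ℝ) :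
    (N.choose r : ℝ) * p ^ r * q ^ (N - r) / ∏ j ∈ range m, ((r : ℝ) + 1 + j)
      = 1 / ((∏ j ∈ range m, ((N : ℝ) + 1 + j)) * p ^ m) *
          (((N + m).choose (r + m) : ℝ) * p ^ (r + m) * q ^ (N - r)) := by
  have key := congrArg (fun n : ℕ => (n : ℝ)) (Nat.choose_mul_prod_range_add m N r)
  push_cast at key
  have hNpos : (0 : ℝ) < ∏ j ∈ range m, ((N : ℝ) + 1 + j) := prod_pos fun j _ => by positivity
  have hrpos : (0 : ℝ) < ∏ j ∈ range m, ((r : ℝ) + 1 + j) := prod_pos fun j _ => by positivity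
  rw [pow_add]
  field_simp
  linear_combination q ^ (N - r) * key

theorem pow_le_prod_range_add (m : ℕ) {x : ℝ} (hx : 0 ≤ x) :
    x ^ m ≤ ∏ j ∈ range m, (x + j) := by
  calc x ^ m = ∏ _j ∈ range m, x := by rw [prod_const, card_range]
    _ ≤ ∏ j ∈ range m, (x + j) :=
        prod_le_prod (fun _ _ => hx) fun j _ => le_add_of_nonneg_right j.cast_nonneg

/-- For `Z ~ Bin(N, p)` (expectations written as explicit binomial sums),
`E[1/((Z+1)(Z+2)⋯(Z+m))]
  = (1/((N+1)(N+2)⋯(N+m) p^m)) · Σ_{r=0}^{N} C(N+m, r+m) p^{r+m} (1−p)^{N−r}`,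
and in particular `E[1/((Z+1)⋯(Z+m))] ≤ 1/((N+1)^m p^m)`. -/
theorem statement4 (m N : ℕ) (p : ℝ) (hp0 : 0 < p) (hp1 : p ≤ 1) :
    (∑ r ∈ Finset.range (N + 1),
        (N.choose r : ℝ) * p ^ r * (1 - p) ^ (N - r) /
          ∏ j ∈ Finset.range m, ((r : ℝ) + 1 + (j : ℝ))
      = 1 / ((∏ j ∈ Finset.range m, ((N : ℝ) + 1 + (j : ℝ))) * p ^ m) *
          ∑ r ∈ Finset.range (N + 1),
            ((N + m).choose (r + m) : ℝ) * p ^ (r + m) * (1 - p) ^ (N - r)) ∧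
    ∑ r ∈ Finset.range (N + 1),
        (N.choose r : ℝ) * p ^ r * (1 - p) ^ (N - r) /
          ∏ j ∈ Finset.range m, ((r : ℝ) + 1 + (j : ℝ))
      ≤ 1 / (((N : ℝ) + 1) ^ m * p ^ m) := by
  have identity : ∑ r ∈ range (N + 1),
        (N.choose r : ℝ) * p ^ r * (1 - p) ^ (N - r) / ∏ j ∈ range m, ((r : ℝ) + 1 + j)
      = 1 / ((∏ j ∈ range m, ((N : ℝ) + 1 + j)) * p ^ m) *
          ∑ r ∈ range (N + 1),
            ((N + m).choose (r + m) : ℝ) * p ^ (r + m) * (1 - p) ^ (N - r) := by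
    rw [mul_sum]
    exact sum_congr rfl fun r _ => choose_mul_pow_div_prod_range m N r hp0.ne' (1 - p)
  refine ⟨identity, ?_⟩
  have hprod : ((N : ℝ) + 1) ^ m ≤ ∏ j ∈ range m, ((N : ℝ) + 1 + j) :=
    pow_le_prod_range_add m (by positivity)
  rw [identity]
  calc _ ≤ 1 / ((∏ j ∈ range m, ((N : ℝ) + 1 + j)) * p ^ m) * 1 := by
        gcongr
        exact sum_range_choose_add_mul_pow_le_one m N hp0.le hp1
    _ ≤ 1 / (((N : ℝ) + 1) ^ m * p ^ m) := by
        rw [mul_one]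
        gcongr
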